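/- Let m be an odd integer with m ≥ 3, let V be a vector space over ℚ, and let ⟨·,·⟩ : V × V → ℚ be a ℚ-bilinear form with symmetrization (x,y) := ⟨x,y⟩ + ⟨y,x⟩. For X : ℤ/mℤ → V set S^X(i) := ∑_{k=0}^{m-1} (−1)^k X(i+k) and E(X) := (1/4)·∑_{i=1}^{m-1} ⟨S^X(i), S^X(i+1)⟩ − (1/4)·⟨S^X(1), S^X(0)⟩ + ∑_{i=0}^{m-1} ⟨X(i), S^X(i) − X(i)⟩, where indices are computed in ℤ/mℤ and the sums ∑_{i=1}^{m-1} and ∑_{i=0}^{m-1} run over the representatives 1,…,m−1 and 0,…,m−1 respectively. Let A, B, I : ℤ/mℤ → V and define M : ℤ/mℤ → V by M(i) = A(i) + B(i) − I(i) − I(i−1). Then: ∑_{i=0}^{m-1} ⟨S^A(i), B(i)⟩ + E(M) = E(A) + E(B) + ∑_{i=0}^{m-1} ( −(1/2)·S^A(i+1), B(i) − B(i+1) ) − ( −(1/2)·S^A(0), −(1/2)·S^B(1) ) + ∑_{i=1}^{m-1} ( −(1/2)·S^A(i+1), −(1/2)·S^B(i) ) + ∑_{i=0}^{m-1} ⟨A(i),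 B(i)⟩ + ∑_{i=0}^{m-1} ⟨M(i) − M(i+1), I(i)⟩ + ∑_{i=1}^{m-1} ⟨I(i−1), I(i)⟩ − ⟨I(0), I(m−1)⟩ − ( I(m−1), −(1/2)·(S^A(1) + S^B(1)) ) + ∑_{i=1}^{m-1} ( I(i), −(1/2)·(S^A(i) + S^B(i)) ). -/

import Mathlib

/-- The alternating cyclic sum `S^X(i) = ∑_{k=0}^{m-1} (-1)^k X(i+k)`,
with indices computed in `ℤ/mℤ`. -/
def altSum {m : ℕ} {V : Type*} [AddCommGroup V] (X : ZMod m → V) (i : ZMod m) : V :=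
  ∑ k ∈ Finset.range m, ((-1 : ℤ) ^ k) • X (i + (k : ZMod m))

/-- The exponent
`E(X) = (1/4) ∑_{i=1}^{m-1} ⟨S^X(i), S^X(i+1)⟩ - (1/4) ⟨S^X(1), S^X(0)⟩
        + ∑_{i=0}^{m-1} ⟨X(i), S^X(i) - X(i)⟩`
appearing in the embedding `φ_m` of Theorem 3.1, with indices computed in `ℤ/mℤ`. -/
def EForm (m : ℕ) {V : Type*} [AddCommGroup V] (b : V → V → ℚ) (X : ZMod m → V) : ℚ :=
  (1 / 4 : ℚ) * ∑ i ∈ Finset.Ico 1 m, b (altSum X (i : ZMod m)) (altSum X ((i : ZMod m) + 1))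
    - (1 / 4 : ℚ) * b (altSum X (1 : ZMod m)) (altSum X (0 : ZMod m))
    + ∑ i ∈ Finset.range m, b (X (i : ZMod m)) (altSum X (i : ZMod m) - X (i : ZMod m))

/-- The symmetrization `(x, y) = ⟨x, y⟩ + ⟨y, x⟩` of a bilinear form. -/
def symForm {V : Type*} (b : V → V → ℚ) (x y : V) : ℚ :=
  b x y + b y x

/-!
For odd `m` the alternating sums satisfy `S^X(i + 1) = 2 X(i) - S^X(i)`, and under
`∑ⱼ ⟨·, ·⟩` the map `X ↦ S^X` is adjoint to `Y ↦ S^Y(· + 1)` (reflect the summation index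
`k ↦ m - 1 - k`; the sign is preserved because `m - 1` is even). Writing every sum over
`1, …, m - 1` as a sum over all of `ℤ/mℤ` minus its `i = 0` term splits the identity into a
boundary part, which is the bilinear expansion of `(S^M(0), S^M(1))` by means of
`S^M(i) = S^A(i) + S^B(i) - 2 I(i - 1)`, and a cyclic part. In the cyclic part, summation by
parts and the recursion remove all shifted indices; what remains is a combination of the
adjointness relation and of its shifted form `∑ⱼ ⟨S^X(j), Y(j - 1) + Y(j)⟩ = 2 ∑ⱼ ⟨X(j), Y(j)⟩`.
-/

open Finset

section CyclicSum

variable {m : ℕ} [NeZero m]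

theorem sum_range_eq_sum_val {α : Type*} [AddCommMonoid α] (g : ℕ → α) :
    ∑ i ∈ range m, g i = ∑ j : ZMod m, g j.val :=
  sum_nbij' (↑) ZMod.val (by simp) (by simp [ZMod.val_lt])
    (fun i hi => ZMod.val_cast_of_lt (mem_range.mp hi)) (fun j _ => ZMod.natCast_zmod_val j)
    (fun i hi => by rw [ZMod.val_cast_of_lt (mem_range.mp hi)])

theorem sum_Ico_one_eq_sum_val_sub {α : Type*} [AddCommGroup α] (g : ℕ → α) :
    ∑ i ∈ Ico 1 m, g i = ∑ j : ZMod m, g j.val - g 0 := by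
  rw [← sum_range_eq_sum_val, sum_range_eq_add_Ico _ (NeZero.pos m), add_sub_cancel_left]

theorem EForm_eq_sum {V : Type*} [AddCommGroup V] (b : V → V → ℚ) (X : ZMod m → V) :
    EForm m b X = (1 / 4) * ∑ j, b (altSum X j) (altSum X (j + 1))
      - (1 / 4) * symForm b (altSum X 0) (altSum X 1) + ∑ j, b (X j) (altSum X j - X j) := by
  simp only [EForm, symForm, sum_range_eq_sum_val, sum_Ico_one_eq_sum_val_sub,
    ZMod.natCast_zmod_val, Nat.cast_zero, zero_add]
  ring

end CyclicSum

section AltSum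

variable {m : ℕ} {V : Type*} [AddCommGroup V]

theorem altSum_add_one (hm : Odd m) (X : ZMod m → V) (i : ZMod m) :
    altSum X (i + 1) = 2 • X i - altSum X i := by
  have h := sum_range_succ' (fun k => (-1 : ℤ) ^ k • X (i + k)) m
  rw [sum_range_succ, ZMod.natCast_self, add_zero, hm.neg_one_pow] at h
  have hshift (k : ℕ) :
      (-1 : ℤ) ^ (k + 1) • X (i + (k + 1 : ℕ)) = -((-1 : ℤ) ^ k • X (i + 1 + k)) := by
    rw [pow_succ, mul_neg_one, neg_smul, Nat.cast_succ, add_comm (k : ZMod m), add_assoc]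
  simp only [hshift, sum_neg_distrib, pow_zero, one_smul, Nat.cast_zero, add_zero] at h
  unfold altSum
  linear_combination (norm := module) h

theorem altSum_add_one_eq_sum_sub (hm : Odd m) (X : ZMod m → V) (i : ZMod m) :
    altSum X (i + 1) = ∑ k ∈ range m, (-1 : ℤ) ^ k • X (i - k) := by
  rw [altSum, ← sum_range_reflect]
  refine sum_congr rfl fun k hk => ?_
  have hk : k < m := mem_range.mp hk
  have hsign : (-1 : ℤ) ^ (m - 1 - k) = (-1) ^ k := by
    rw [neg_one_pow_eq_pow_mod_two, neg_one_pow_eq_pow_mod_two (n := k)]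
    have hmod := Nat.odd_iff.mp hm
    congr 1
    omega
  have hidx : i + 1 + ((m - 1 - k : ℕ) : ZMod m) = i - k := by
    rw [Nat.cast_sub (by omega), Nat.cast_pred hm.pos, ZMod.natCast_self]
    ring
  rw [hsign, hidx]

theorem altSum_eq_add_sub_two_nsmul (hm : Odd m) {A B I M : ZMod m → V}
    (hM : ∀ i, M i = A i + B i - I i - I (i - 1)) (j : ZMod m) :
    altSum M j = altSum A j + altSum B j - 2 • I (j - 1) := by
  have hlin : altSum M j = altSum A j + altSum B j - altSum I j - altSum I (j - 1) := by
    unfold altSum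
    rw [← sum_add_distrib, ← sum_sub_distrib, ← sum_sub_distrib]
    refine sum_congr rfl fun k _ => ?_
    rw [hM, show j + k - 1 = j - 1 + k by ring, smul_sub, smul_sub, smul_add]
  have hI := altSum_add_one hm I (j - 1)
  rw [sub_add_cancel] at hI
  rw [hlin, hI]
  abel

end AltSum

section Bilinear

variable {m : ℕ} [NeZero m] {R V W P : Type*} [CommSemiring R] [AddCommGroup V] [Module R V]
  [AddCommGroup W] [Module R W] [AddCommGroup P] [Module R P] (β : V →ₗ[R] W →ₗ[R] P)

theorem sum_map_sub_add_one (x : ZMod m → V) (y : ZMod m → W) :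
    ∑ j, β (x j) (y j - y (j + 1)) = ∑ j, β (x j - x (j - 1)) (y j) := by
  simp only [map_sub, LinearMap.sub_apply, sum_sub_distrib]
  congr 1
  exact Fintype.sum_equiv (Equiv.addRight 1) _ _ fun j => by
    rw [Equiv.coe_addRight, add_sub_cancel_right]

theorem sum_map_sub_add_one_left (x : ZMod m → V) (y : ZMod m → W) :
    ∑ j, β (x j - x (j + 1)) (y j) = ∑ j, β (x j) (y j - y (j - 1)) := by
  simpa only [LinearMap.flip_apply] using sum_map_sub_add_one β.flip y x

theorem sum_map_altSum_eq_sum_map_altSum_add_one (hm : Odd m)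
    (X : ZMod m → V) (Y : ZMod m → W) :
    ∑ j, β (altSum X j) (Y j) = ∑ j, β (X j) (altSum Y (j + 1)) := by
  simp only [altSum_add_one_eq_sum_sub hm]
  simp only [altSum, map_sum, map_zsmul, LinearMap.sum_apply, LinearMap.smul_apply]
  rw [sum_comm, sum_comm (s := univ)]
  refine sum_congr rfl fun k _ => ?_
  exact Fintype.sum_equiv (Equiv.addRight (k : ZMod m)) _ _ fun j => by
    rw [Equiv.coe_addRight, add_sub_cancel_right]

theorem sum_map_altSum_add_sum_map_altSum (hm : Odd m) (X : ZMod m → V) (Y : ZMod m → W) :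
    ∑ j, β (altSum X j) (Y j) + ∑ j, β (X j) (altSum Y j) = 2 • ∑ j, β (X j) (Y j) := by
  rw [sum_map_altSum_eq_sum_map_altSum_add_one β hm, ← sum_add_distrib, smul_sum]
  refine sum_congr rfl fun j _ => ?_
  rw [← map_add, altSum_add_one hm, sub_add_cancel, map_nsmul]

theorem sum_map_altSum_sub_one_add_sum_map_altSum (hm : Odd m) (X : ZMod m → V)
    (Y : ZMod m → W) :
    ∑ j, β (altSum X j) (Y (j - 1)) + ∑ j, β (altSum X j) (Y j) = 2 • ∑ j, β (X j) (Y j) := by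
  have hshift : ∑ j, β (altSum X j) (Y (j - 1)) = ∑ j, β (altSum X (j + 1)) (Y j) :=
    Fintype.sum_equiv (Equiv.subRight 1) _ _ fun j => by
      rw [Equiv.subRight_apply, sub_add_cancel]
  rw [hshift, ← sum_add_distrib, smul_sum]
  refine sum_congr rfl fun j _ => ?_
  rw [← LinearMap.add_apply, ← map_add, altSum_add_one hm, sub_add_cancel, map_nsmul,
    LinearMap.smul_apply]

end Bilinear

section Exponent

variable {m : ℕ} {V : Type*} [AddCommGroup V] [Module ℚ V] (β : V →ₗ[ℚ] V →ₗ[ℚ] ℚ)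
  {A B I M : ZMod m → V}

theorem boundary_exponent_identity (hm : Odd m) (hM : ∀ i, M i = A i + B i - I i - I (i - 1)) :
    (1 / 4) * symForm (β · ·) (altSum M 0) (altSum M 1)
      = (1 / 4) * symForm (β · ·) (altSum A 0) (altSum A 1)
        + (1 / 4) * symForm (β · ·) (altSum B 0) (altSum B 1)
        + symForm (β · ·) ((-(1 / 2) : ℚ) • altSum A 0) ((-(1 / 2) : ℚ) • altSum B 1)
        + symForm (β · ·) ((-(1 / 2) : ℚ) • altSum A 1) ((-(1 / 2) : ℚ) • altSum B 0)
        + β (I (-1)) (I 0) + β (I 0) (I (-1))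
        + symForm (β · ·) (I (-1)) ((-(1 / 2) : ℚ) • (altSum A 1 + altSum B 1))
        + symForm (β · ·) (I 0) ((-(1 / 2) : ℚ) • (altSum A 0 + altSum B 0)) := by
  simp only [altSum_eq_add_sub_two_nsmul hm hM, zero_sub, sub_self, symForm, map_add, map_sub,
    map_smul, map_nsmul, LinearMap.add_apply, LinearMap.sub_apply, LinearMap.smul_apply,
    smul_eq_mul, nsmul_eq_mul, Nat.cast_ofNat]
  ring

variable [NeZero m]

def cyclicEForm (X : ZMod m → V) : ℚ :=
  (1 / 2) * ∑ j, β (X j) (altSum X j) - (1 / 4) * ∑ j, β (altSum X j) (altSum X j)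

theorem EForm_eq_cyclicEForm_sub (hm : Odd m) (X : ZMod m → V) :
    EForm m (β · ·) X
      = cyclicEForm β X - (1 / 4) * symForm (β · ·) (altSum X 0) (altSum X 1) := by
  have hX := sum_map_altSum_add_sum_map_altSum β hm X X
  rw [EForm_eq_sum, cyclicEForm]
  simp only [altSum_add_one hm, map_sub, map_nsmul, nsmul_eq_mul, Nat.cast_ofNat,
    sum_sub_distrib, ← mul_sum] at hX ⊢
  linear_combination (1 / 2) * hX

theorem cyclic_exponent_identity (hm : Odd m) (hM : ∀ i, M i = A i + B i - I i - I (i - 1)) :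
    ∑ j, β (altSum A j) (B j) + cyclicEForm β M
      = cyclicEForm β A + cyclicEForm β B
        + ∑ j, symForm (β · ·) ((-(1 / 2) : ℚ) • altSum A (j + 1)) (B j - B (j + 1))
        + ∑ j, symForm (β · ·) ((-(1 / 2) : ℚ) • altSum A (j + 1)) ((-(1 / 2) : ℚ) • altSum B j)
        + ∑ j, β (A j) (B j) + ∑ j, β (M j - M (j + 1)) (I j) + ∑ j, β (I (j - 1)) (I j)
        + ∑ j, symForm (β · ·) (I j) ((-(1 / 2) : ℚ) • (altSum A j + altSum B j)) := by
  have hBA := sum_map_altSum_add_sum_map_altSum β hm B A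
  have hAI := sum_map_altSum_sub_one_add_sum_map_altSum β hm A I
  have hBI := sum_map_altSum_sub_one_add_sum_map_altSum β hm B I
  have hII : ∑ j, β (I (j - 1)) (I (j - 1)) = ∑ j, β (I j) (I j) :=
    Fintype.sum_equiv (Equiv.subRight 1) _ _ fun _ => rfl
  simp only [symForm, sum_add_distrib, sum_map_sub_add_one, sum_map_sub_add_one_left]
  simp only [cyclicEForm, altSum_add_one hm, altSum_eq_add_sub_two_nsmul hm hM, hM,
    sub_add_cancel, map_add, map_sub, map_smul, map_nsmul, LinearMap.add_apply,
    LinearMap.sub_apply, LinearMap.smul_apply, smul_eq_mul, nsmul_eq_mul, Nat.cast_ofNat,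
    sum_add_distrib, sum_sub_distrib, ← mul_sum] at hBA hAI hBI ⊢
  linear_combination (-(1 / 2) : ℚ) * hBA + (1 / 2 : ℚ) * hAI + (1 / 2 : ℚ) * hBI - hII

end Exponent

theorem exponent_identity_general {m : ℕ} (hm : Odd m)
    {V : Type*} [AddCommGroup V] [Module ℚ V] (b : V → V → ℚ)
    (hb_addl : ∀ x y z : V, b (x + y) z = b x z + b y z)
    (hb_addr : ∀ x y z : V, b x (y + z) = b x y + b x z)
    (hb_smull : ∀ (c : ℚ) (x y : V), b (c • x) y = c * b x y)
    (hb_smulr : ∀ (c : ℚ) (x y : V), b x (c • y) = c * b x y)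
    (A B I M : ZMod m → V)
    (hM : ∀ i : ZMod m, M i = A i + B i - I i - I (i - 1)) :
    (∑ i ∈ Finset.range m, b (altSum A (i : ZMod m)) (B (i : ZMod m))) + EForm m b M
      = EForm m b A + EForm m b B
        + (∑ i ∈ Finset.range m,
            symForm b ((-(1 / 2) : ℚ) • altSum A ((i : ZMod m) + 1))
              (B (i : ZMod m) - B ((i : ZMod m) + 1)))
        - symForm b ((-(1 / 2) : ℚ) • altSum A (0 : ZMod m))
            ((-(1 / 2) : ℚ) • altSum B (1 : ZMod m))
        + (∑ i ∈ Finset.Ico 1 m,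
            symForm b ((-(1 / 2) : ℚ) • altSum A ((i : ZMod m) + 1))
              ((-(1 / 2) : ℚ) • altSum B (i : ZMod m)))
        + (∑ i ∈ Finset.range m, b (A (i : ZMod m)) (B (i : ZMod m)))
        + (∑ i ∈ Finset.range m,
            b (M (i : ZMod m) - M ((i : ZMod m) + 1)) (I (i : ZMod m)))
        + (∑ i ∈ Finset.Ico 1 m, b (I ((i : ZMod m) - 1)) (I (i : ZMod m)))
        - b (I (0 : ZMod m)) (I ((m - 1 : ℕ) : ZMod m))
        - symForm b (I ((m - 1 : ℕ) : ZMod m))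
            ((-(1 / 2) : ℚ) • (altSum A (1 : ZMod m) + altSum B (1 : ZMod m)))
        + (∑ i ∈ Finset.Ico 1 m,
            symForm b (I (i : ZMod m))
              ((-(1 / 2) : ℚ) • (altSum A (i : ZMod m) + altSum B (i : ZMod m)))) := by
  have : NeZero m := ⟨hm.pos.ne'⟩
  obtain ⟨β, rfl⟩ : ∃ β : V →ₗ[ℚ] V →ₗ[ℚ] ℚ, (β · ·) = b :=
    ⟨LinearMap.mk₂ ℚ b hb_addl hb_smull hb_addr hb_smulr, rfl⟩
  have hlast : ((m - 1 : ℕ) : ZMod m) = -1 := by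
    rw [Nat.cast_pred hm.pos, ZMod.natCast_self, zero_sub]
  simp only [hlast, EForm_eq_cyclicEForm_sub β hm, sum_range_eq_sum_val,
    sum_Ico_one_eq_sum_val_sub, ZMod.natCast_zmod_val, Nat.cast_zero, zero_add, zero_sub]
  linear_combination cyclic_exponent_identity β hm hM - boundary_exponent_identity β hm hM

/-- The exponent identity at the heart of Theorem 3.1: for odd `m ≥ 3`, a `ℚ`-bilinear
form `⟨·,·⟩` on a `ℚ`-vector space `V`, functions `A B I : ℤ/mℤ → V` and
`M(i) = A(i) + B(i) - I(i) - I(i-1)`, comparing the exponents of `v` on the two sides of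
`φ_m(u_A u_B) = φ_m(u_A) φ_m(u_B)` gives
`∑ ⟨S^A(i), B(i)⟩ + E(M) = E(A) + E(B) + t₀ + t₁ + t₂ + t₃`. -/
theorem exponent_identity {m : ℕ} (hm : Odd m) (hm3 : 3 ≤ m)
    {V : Type*} [AddCommGroup V] [Module ℚ V] (b : V → V → ℚ)
    (hb_addl : ∀ x y z : V, b (x + y) z = b x z + b y z)
    (hb_addr : ∀ x y z : V, b x (y + z) = b x y + b x z)
    (hb_smull : ∀ (c : ℚ) (x y : V), b (c • x) y = c * b x y)
    (hb_smulr : ∀ (c : ℚ) (x y : V), b x (c • y) = c * b x y)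
    (A B I M : ZMod m → V)
    (hM : ∀ i : ZMod m, M i = A i + B i - I i - I (i - 1)) :
    (∑ i ∈ Finset.range m, b (altSum A (i : ZMod m)) (B (i : ZMod m))) + EForm m b M
      = EForm m b A + EForm m b B
        + (∑ i ∈ Finset.range m,
            symForm b ((-(1 / 2) : ℚ) • altSum A ((i : ZMod m) + 1))
              (B (i : ZMod m) - B ((i : ZMod m) + 1)))
        - symForm b ((-(1 / 2) : ℚ) • altSum A (0 : ZMod m))
            ((-(1 / 2) : ℚ) • altSum B (1 : ZMod m))
        + (∑ i ∈ Finset.Ico 1 m,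
            symForm b ((-(1 / 2) : ℚ) • altSum A ((i : ZMod m) + 1))
              ((-(1 / 2) : ℚ) • altSum B (i : ZMod m)))
        + (∑ i ∈ Finset.range m, b (A (i : ZMod m)) (B (i : ZMod m)))
        + (∑ i ∈ Finset.range m,
            b (M (i : ZMod m) - M ((i : ZMod m) + 1)) (I (i : ZMod m)))
        + (∑ i ∈ Finset.Ico 1 m, b (I ((i : ZMod m) - 1)) (I (i : ZMod m)))
        - b (I (0 : ZMod m)) (I ((m - 1 : ℕ) : ZMod m))
        - symForm b (I ((m - 1 : ℕ) : ZMod m))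
            ((-(1 / 2) : ℚ) • (altSum A (1 : ZMod m) + altSum B (1 : ZMod m)))
        + (∑ i ∈ Finset.Ico 1 m,
            symForm b (I (i : ZMod m))
              ((-(1 / 2) : ℚ) • (altSum A (i : ZMod m) + altSum B (i : ZMod m)))) :=
  exponent_identity_general hm b hb_addl hb_addr hb_smull hb_smulr A B I M hM
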